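/- arXiv:1410.7317 — 8 statements merged into one kernel-verified Lean document; each statement's English description precedes it below -/
import Mathlib

section
/- For every t ≥ 0, the two-dimensional Lebesgue measure of the overlap A_t ∩ A equals leb(A_t ∩ A) = ∫_{-∞}^{-t} (d(s) − b) ds, and the function t ↦ leb(A_t ∩ A) is monotonically decreasing on [0,∞). -/
open MeasureTheory Set Filter

/-- For the squashed trawl `A` generated by a trawl function `d` with
permanence parameter `b`, for every `t ≥ 0` the two-dimensional Lebesgue measure of the
overlap `A_t ∩ A` equals `∫_{-∞}^{-t} (d s - b) ds`, and `t ↦ leb (A_t ∩ A)` is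
monotonically decreasing on `[0, ∞)`. -/
theorem trawl_overlap_area_and_antitone
    (b : ℝ) (hb : b ∈ Set.Icc (0:ℝ) 1)
    (d : ℝ → ℝ)
    (hd_cont : ContinuousOn d (Set.Iic 0))
    (hd_mono : MonotoneOn d (Set.Iic 0))
    (hd_range : ∀ s ≤ (0:ℝ), d s ∈ Set.Icc b 1)
    (hd0 : d 0 = 1)
    (hd_lim : Filter.Tendsto d Filter.atBot (nhds b))
    (hd_int : MeasureTheory.IntegrableOn (fun s => d s - b) (Set.Iic 0))
    (A : ℝ → Set (ℝ × ℝ))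
    (hA : ∀ t, A t = {p : ℝ × ℝ | p.2 ≤ t ∧ b ≤ p.1 ∧ p.1 < d (p.2 - t)}) :
    (∀ t ≥ (0:ℝ),
      volume (A t ∩ A 0) = ENNReal.ofReal (∫ s in Set.Iic (-t), (d s - b))) ∧
    AntitoneOn (fun t => volume (A t ∩ A 0)) (Set.Ici 0) := by
  -- extended trawl function, defined (and monotone/measurable) on all of ℝ
  set d' : ℝ → ℝ := fun s => d (min s 0) with hd'def
  have hd'_mono : Monotone d' := fun s s' h =>
    hd_mono (min_le_right s 0) (min_le_right s' 0) (min_le_min h le_rfl)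
  have hd'_meas : Measurable d' := hd'_mono.measurable
  have hd'_eq : ∀ s ≤ (0:ℝ), d' s = d s := fun s hs => by
    simp [hd'def, min_eq_left hs]
  have hd'_nonneg : ∀ s : ℝ, 0 ≤ d' s - b := fun s => by
    have := (hd_range (min s 0) (min_le_right s 0)).1
    simpa [hd'def, sub_nonneg] using this
  have hg_int : IntegrableOn (fun s => d' s - b) (Iic (0:ℝ)) := by
    apply hd_int.congr_fun (fun s hs => ?_) measurableSet_Iic
    rw [hd'_eq s hs]
  -- the key formula
  have key : ∀ t ≥ (0:ℝ),
      volume (A t ∩ A 0) = ENNReal.ofReal (∫ s in Set.Iic (-t), (d s - b)) := by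
    intro t ht
    -- the intersection set
    have hS_eq : A t ∩ A 0 =
        {p : ℝ × ℝ | p.2 ≤ 0} ∩ {p | b ≤ p.1} ∩ {p | p.1 < d' (p.2 - t)} := by
      ext p
      simp only [hA, mem_inter_iff, mem_setOf_eq, sub_zero]
      constructor
      · rintro ⟨⟨_, hbx, hlt⟩, hs0, _, _⟩
        have hst : p.2 - t ≤ 0 := by linarith
        exact ⟨⟨hs0, hbx⟩, by rwa [hd'_eq _ hst]⟩
      · rintro ⟨⟨hs0, hbx⟩, hlt⟩
        have hst : p.2 - t ≤ 0 := by linarith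
        rw [hd'_eq _ hst] at hlt
        refine ⟨⟨by linarith, hbx, hlt⟩, hs0, hbx, ?_⟩
        exact lt_of_lt_of_le hlt (hd_mono hst hs0 (by linarith))
    have hS_meas : MeasurableSet
        ({p : ℝ × ℝ | p.2 ≤ 0} ∩ {p | b ≤ p.1} ∩ {p | p.1 < d' (p.2 - t)}) :=
      ((measurableSet_le measurable_snd measurable_const).inter
        (measurableSet_le measurable_const measurable_fst)).inter
        (measurableSet_lt measurable_fst (hd'_meas.comp (measurable_snd.sub measurable_const)))
    rw [hS_eq]
    rw [Measure.volume_eq_prod, Measure.prod_apply_symm hS_meas]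
    have hslice : ∀ s : ℝ, volume ((fun x => (x, s)) ⁻¹'
        ({p : ℝ × ℝ | p.2 ≤ 0} ∩ {p | b ≤ p.1} ∩ {p | p.1 < d' (p.2 - t)})) =
        (Iic (0:ℝ)).indicator (fun s => ENNReal.ofReal (d' (s - t) - b)) s := by
      intro s
      by_cases hs : s ≤ 0
      · have : ((fun x => (x, s)) ⁻¹'
            ({p : ℝ × ℝ | p.2 ≤ 0} ∩ {p | b ≤ p.1} ∩ {p | p.1 < d' (p.2 - t)})) =
            Ico b (d' (s - t)) := by
          ext x; simp [hs, mem_Ico, and_assoc]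
        rw [this, Real.volume_Ico, indicator_of_mem (mem_Iic.2 hs)]
      · have : ((fun x => (x, s)) ⁻¹'
            ({p : ℝ × ℝ | p.2 ≤ 0} ∩ {p | b ≤ p.1} ∩ {p | p.1 < d' (p.2 - t)})) = ∅ := by
          ext x; simp [hs]
        rw [this, measure_empty, indicator_of_notMem (by simpa using hs)]
    rw [lintegral_congr hslice, lintegral_indicator measurableSet_Iic _]
    -- indicator identity for the change of variables
    have h_ind : (Iic (0:ℝ)).indicator (fun s => d' (s - t) - b) =
        fun s => (Iic (-t)).indicator (fun u => d' u - b) (s - t) := by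
      funext s
      by_cases hs : s ≤ 0
      · rw [indicator_of_mem (mem_Iic.2 hs),
          indicator_of_mem (mem_Iic.2 (by linarith : s - t ≤ -t))]
      · rw [indicator_of_notMem (by simpa using hs),
          indicator_of_notMem (by simp only [mem_Iic]; push_neg at hs ⊢; linarith)]
    have hgI : Integrable ((Iic (-t)).indicator (fun u => d' u - b)) :=
      (hg_int.mono_set (Iic_subset_Iic.2 (by linarith))).integrable_indicator
        measurableSet_Iic
    have h_int2 : IntegrableOn (fun s => d' (s - t) - b) (Iic (0:ℝ)) := by
      rw [← integrable_indicator_iff measurableSet_Iic, h_ind]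
      exact hgI.comp_sub_right t
    have h_eq2 : ∫ s in Iic (0:ℝ), (d' (s - t) - b) = ∫ s in Iic (-t), (d' s - b) := by
      rw [← integral_indicator measurableSet_Iic, h_ind,
        integral_sub_right_eq_self (fun s => (Iic (-t)).indicator (fun u => d' u - b) s) t,
        integral_indicator measurableSet_Iic]
    rw [← ofReal_integral_eq_lintegral_ofReal h_int2
      (Filter.Eventually.of_forall (fun s => hd'_nonneg _)), h_eq2]
    congr 1
    apply setIntegral_congr_fun measurableSet_Iic
    intro s hs
    show d' s - b = d s - b
    rw [hd'_eq s (le_trans hs (by linarith))]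
  refine ⟨key, ?_⟩
  intro t1 h1 t2 h2 h12
  have h1' : (0:ℝ) ≤ t1 := h1
  have h2' : (0:ℝ) ≤ t2 := h2
  simp only
  rw [key t1 h1, key t2 h2]
  apply ENNReal.ofReal_le_ofReal
  apply setIntegral_mono_set (hd_int.mono_set (Iic_subset_Iic.2 (by linarith)))
  · apply Filter.Eventually.filter_mono (ae_mono (Measure.restrict_mono
      (Iic_subset_Iic.2 (by linarith : -t1 ≤ (0:ℝ))) le_rfl))
    filter_upwards [ae_restrict_mem measurableSet_Iic] with s hs
    have := (hd_range s hs).1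
    simp [sub_nonneg, this]
  · exact HasSubset.Subset.eventuallyLE (Iic_subset_Iic.2 (by linarith))
end

section
/- For every t ≥ 0 one has the chain of equalities leb(A_t \ A) = leb(A) − leb(A_t ∩ A) = leb(A \ A_t) = ∫_{-t}^0 (d(s) − b) ds, and in particular leb(A) = ∫_{-∞}^0 (d(s) − b) ds < ∞. -/
open MeasureTheory Set ENNReal

/-! `A_t` is the translate of `A = A_0` by `(0, t)`, so by translation invariance both have the area
`∫_{-∞}^0 (d - b)` computed slice by slice (Tonelli), and then `A_t \ A` and `A \ A_t` have equal
area. As `d` is increasing, `A_t \ A` is the part of `A_t` above `s = 0`, i.e. the translate of the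
part of `A` over `(-t, 0]`, whose area is `∫_{-t}^0 (d - b)`. Measurability comes from the monotone
extension `s ↦ d (min s 0)` of `d`. -/

section RegionBelowGraph

/-- The transpose of Mathlib's `regionBetween (fun _ ↦ b) f I`, with its lower boundary included:
the base variable is the second coordinate, as in the trawl. -/
def regionBelowGraph (b : ℝ) (f : ℝ → ℝ) (I : Set ℝ) : Set (ℝ × ℝ) :=
  {p | p.2 ∈ I ∧ p.1 ∈ Ico b (f p.2)}

variable {b : ℝ} {f g : ℝ → ℝ} {I : Set ℝ}

theorem regionBelowGraph_congr (h : EqOn f g I) :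
    regionBelowGraph b f I = regionBelowGraph b g I := by
  ext p
  simp only [regionBelowGraph, mem_ofPred_eq, and_congr_right_iff]
  intro hp
  rw [h hp]

theorem measurableSet_regionBelowGraph (hf : Measurable f) (hI : MeasurableSet I) :
    MeasurableSet (regionBelowGraph b f I) :=
  (measurable_snd hI).inter <| (measurableSet_le measurable_const measurable_fst).inter
    (measurableSet_lt measurable_fst (hf.comp measurable_snd))

theorem volume_regionBelowGraph (hf : Measurable f) (hI : MeasurableSet I) :
    volume (regionBelowGraph b f I) = ∫⁻ s in I, ENNReal.ofReal (f s - b) := by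
  rw [Measure.volume_eq_prod, Measure.prod_apply_symm (measurableSet_regionBelowGraph hf hI),
    ← lintegral_indicator hI]
  refine lintegral_congr fun s => ?_
  by_cases hs : s ∈ I
  · rw [indicator_of_mem hs, ← Real.volume_Ico]
    congr 1
    ext x
    simp [regionBelowGraph, hs]
  · simp [regionBelowGraph, hs]

end RegionBelowGraph

theorem eqOn_comp_min_of_subset_Iic {α β : Type*} [LinearOrder α] {f : α → β} {a : α}
    {I : Set α} (hIa : I ⊆ Iic a) : EqOn f (fun x => f (min x a)) I :=
  fun _ hx => congrArg f (min_eq_left (mem_Iic.1 (hIa hx))).symm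

theorem MonotoneOn.monotone_comp_min_Iic {α β : Type*} [LinearOrder α] [Preorder β] {f : α → β}
    {a : α} (hf : MonotoneOn f (Iic a)) : Monotone fun x => f (min x a) :=
  fun _ _ hxy => hf (min_le_right _ a) (min_le_right _ a) (min_le_min_right a hxy)

namespace MonotoneOn

variable {b a : ℝ} {f : ℝ → ℝ} {I : Set ℝ}

theorem measurableSet_regionBelowGraph (hf : MonotoneOn f (Iic a)) (hI : MeasurableSet I)
    (hIa : I ⊆ Iic a) : MeasurableSet (regionBelowGraph b f I) := by
  rw [regionBelowGraph_congr (eqOn_comp_min_of_subset_Iic hIa)]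
  exact _root_.measurableSet_regionBelowGraph hf.monotone_comp_min_Iic.measurable hI

theorem volume_regionBelowGraph (hf : MonotoneOn f (Iic a)) (hI : MeasurableSet I)
    (hIa : I ⊆ Iic a) :
    volume (regionBelowGraph b f I) = ∫⁻ s in I, ENNReal.ofReal (f s - b) := by
  rw [regionBelowGraph_congr (eqOn_comp_min_of_subset_Iic hIa),
    _root_.volume_regionBelowGraph hf.monotone_comp_min_Iic.measurable hI]
  exact setLIntegral_congr_fun hI fun x hx => by rw [min_eq_left (mem_Iic.1 (hIa hx))]

end MonotoneOn

section Trawl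

/-- `trawl b d t` is the paper's `A_t`. -/
def trawl (b : ℝ) (d : ℝ → ℝ) (t : ℝ) : Set (ℝ × ℝ) :=
  {p | p.2 ≤ t ∧ b ≤ p.1 ∧ p.1 < d (p.2 - t)}

variable {b t : ℝ} {d : ℝ → ℝ}

theorem trawl_zero : trawl b d 0 = regionBelowGraph b d (Iic 0) := by
  ext p
  simp [trawl, regionBelowGraph]

theorem trawl_eq_preimage_add : trawl b d t = (· + (0, -t)) ⁻¹' trawl b d 0 := by
  ext p
  simp [trawl, sub_eq_add_neg]

theorem trawl_sdiff_trawl_zero (hd : MonotoneOn d (Iic 0)) (ht : 0 ≤ t) :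
    trawl b d t \ trawl b d 0 = (· + (0, -t)) ⁻¹' regionBelowGraph b d (Ioc (-t) 0) := by
  ext ⟨x, s⟩
  simp only [trawl, regionBelowGraph, mem_sdiff, mem_ofPred_eq, mem_preimage, Prod.mk_add_mk,
    add_zero, mem_Ioc, mem_Ico, sub_zero, ← sub_eq_add_neg]
  constructor
  · rintro ⟨⟨hst, hbx, hx⟩, hx0⟩
    have hs : 0 < s := lt_of_not_ge fun hs =>
      hx0 ⟨hs, hbx, hx.trans_le (hd (by simp only [mem_Iic]; linarith) hs (by linarith))⟩
    exact ⟨⟨by linarith, by linarith⟩, hbx, hx⟩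
  · rintro ⟨⟨hs, hst⟩, hbx, hx⟩
    exact ⟨⟨by linarith, hbx, hx⟩, fun h => by linarith [h.1]⟩

theorem measurableSet_trawl (hd : MonotoneOn d (Iic 0)) : MeasurableSet (trawl b d t) := by
  rw [trawl_eq_preimage_add, trawl_zero]
  exact (hd.measurableSet_regionBelowGraph measurableSet_Iic subset_rfl).preimage
    (measurable_add_const _)

theorem volume_trawl (hd : MonotoneOn d (Iic 0)) :
    volume (trawl b d t) = ∫⁻ s in Iic 0, ENNReal.ofReal (d s - b) := by
  rw [trawl_eq_preimage_add, measure_preimage_add_right, trawl_zero,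
    hd.volume_regionBelowGraph measurableSet_Iic subset_rfl]

theorem volume_trawl_sdiff_trawl_zero (hd : MonotoneOn d (Iic 0)) (ht : 0 ≤ t) :
    volume (trawl b d t \ trawl b d 0) = ∫⁻ s in Ioc (-t) 0, ENNReal.ofReal (d s - b) := by
  rw [trawl_sdiff_trawl_zero hd ht, measure_preimage_add_right,
    hd.volume_regionBelowGraph measurableSet_Ioc Ioc_subset_Iic_self]

end Trawl

theorem setLIntegral_ofReal_sub_eq_ofReal_setIntegral {b : ℝ} {f : ℝ → ℝ} {I : Set ℝ}
    (hI : MeasurableSet I) (hf : IntegrableOn (fun s => f s - b) I) (hfb : ∀ s ∈ I, b ≤ f s) :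
    ∫⁻ s in I, ENNReal.ofReal (f s - b) = ENNReal.ofReal (∫ s in I, f s - b) :=
  (ofReal_integral_eq_lintegral_ofReal hf <|
    (ae_restrict_iff' hI).2 (ae_of_all _ fun s hs => sub_nonneg.2 (hfb s hs))).symm

theorem trawl_increment_area_general
    (b : ℝ)
    (d : ℝ → ℝ)
    (hd_mono : MonotoneOn d (Set.Iic 0))
    (hd_range : ∀ s ≤ (0:ℝ), d s ∈ Set.Icc b 1)
    (hd_int : MeasureTheory.IntegrableOn (fun s => d s - b) (Set.Iic 0))
    (A : ℝ → Set (ℝ × ℝ))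
    (hA : ∀ t, A t = {p : ℝ × ℝ | p.2 ≤ t ∧ b ≤ p.1 ∧ p.1 < d (p.2 - t)}) :
    (∀ t ≥ (0:ℝ),
      volume (A t \ A 0) = volume (A 0) - volume (A t ∩ A 0) ∧
      volume (A t \ A 0) = volume (A 0 \ A t) ∧
      volume (A t \ A 0) = ENNReal.ofReal (∫ s in Set.Ioc (-t) 0, (d s - b))) ∧
    volume (A 0) = ENNReal.ofReal (∫ s in Set.Iic 0, (d s - b)) ∧
    volume (A 0) < ⊤ := by
  obtain rfl : A = trawl b d := funext hA
  have hlint {I : Set ℝ} (hI : MeasurableSet I) (hI0 : I ⊆ Iic 0) :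
      ∫⁻ s in I, ENNReal.ofReal (d s - b) = ENNReal.ofReal (∫ s in I, d s - b) :=
    setLIntegral_ofReal_sub_eq_ofReal_setIntegral hI (hd_int.mono_set hI0)
      fun s hs => (hd_range s (hI0 hs)).1
  have hvol (t : ℝ) : volume (trawl b d t) = ENNReal.ofReal (∫ s in Iic 0, d s - b) :=
    (volume_trawl hd_mono).trans (hlint measurableSet_Iic subset_rfl)
  have hmeas (t : ℝ) : MeasurableSet (trawl b d t) := measurableSet_trawl hd_mono
  have hfin (t : ℝ) (s : Set (ℝ × ℝ)) : volume (trawl b d t ∩ s) ≠ ∞ :=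
    measure_ne_top_of_subset inter_subset_left ((hvol t).trans_ne ofReal_ne_top)
  have hvol_eq (t : ℝ) : volume (trawl b d t) = volume (trawl b d 0) :=
    (hvol t).trans (hvol 0).symm
  refine ⟨fun t ht => ⟨?_, ?_, ?_⟩, hvol 0, (hvol 0).trans_lt ofReal_lt_top⟩
  · rw [← hvol_eq t]
    exact ENNReal.eq_sub_of_add_eq (hfin t _) (measure_sdiff_add_inter _ (hmeas 0))
  · exact measure_sdiff_symm (hmeas t).nullMeasurableSet (hmeas 0).nullMeasurableSet
      (hvol_eq t) (hfin t _)
  · rw [volume_trawl_sdiff_trawl_zero hd_mono ht,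
      hlint measurableSet_Ioc Ioc_subset_Iic_self]

/-- For every `t ≥ 0`, one has
`leb(A_t \ A) = leb(A) − leb(A_t ∩ A) = leb(A \ A_t) = ∫_{-t}^0 (d s − b) ds`,
and in particular `leb(A) = ∫_{-∞}^0 (d s − b) ds < ∞`. -/
theorem trawl_increment_area
    (b : ℝ) (hb : b ∈ Set.Icc (0:ℝ) 1)
    (d : ℝ → ℝ)
    (hd_cont : ContinuousOn d (Set.Iic 0))
    (hd_mono : MonotoneOn d (Set.Iic 0))
    (hd_range : ∀ s ≤ (0:ℝ), d s ∈ Set.Icc b 1)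
    (hd0 : d 0 = 1)
    (hd_lim : Filter.Tendsto d Filter.atBot (nhds b))
    (hd_int : MeasureTheory.IntegrableOn (fun s => d s - b) (Set.Iic 0))
    (A : ℝ → Set (ℝ × ℝ))
    (hA : ∀ t, A t = {p : ℝ × ℝ | p.2 ≤ t ∧ b ≤ p.1 ∧ p.1 < d (p.2 - t)}) :
    (∀ t ≥ (0:ℝ),
      volume (A t \ A 0) = volume (A 0) - volume (A t ∩ A 0) ∧
      volume (A t \ A 0) = volume (A 0 \ A t) ∧
      volume (A t \ A 0) = ENNReal.ofReal (∫ s in Set.Ioc (-t) 0, (d s - b))) ∧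
    volume (A 0) = ENNReal.ofReal (∫ s in Set.Iic 0, (d s - b)) ∧
    volume (A 0) < ⊤ :=
  trawl_increment_area_general b d hd_mono hd_range hd_int A hA
end

section
/- The function g(t) := leb(A_t ∩ A) is differentiable at every t > 0 with derivative g′(t) = −(d(−t) − b). -/
open MeasureTheory Set Filter

/-!
Since `d` is increasing, `A_t ∩ A` is the translate by `(0, t)` of the part of `A` lying in the
half-plane `s ≤ -t`. By Fubini its area is `∫_{-∞}^{-t} (d(s) - b) ds`, which the fundamental
theorem of calculus differentiates at every point where `d` is continuous.
-/

theorem hasDerivAt_setIntegral_Iic {E : Type*} [NormedAddCommGroup E] [NormedSpace ℝ E]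
    [CompleteSpace E] {f : ℝ → E} {a x : ℝ} (hf : IntegrableOn f (Iic a)) (hxa : x < a)
    (hfx : ContinuousAt f x) :
    HasDerivAt (fun y => ∫ u in Iic y, f u) (f x) x := by
  have hFTC := (intervalIntegral.integral_hasDerivAt_right (a := x) IntervalIntegrable.refl
    ⟨Iic a, Iic_mem_nhds hxa, hf.aestronglyMeasurable⟩ hfx).const_add (∫ u in Iic x, f u)
  refine hFTC.congr_of_eventuallyEq ?_
  filter_upwards [Iio_mem_nhds hxa] with y hy
  rw [← intervalIntegral.integral_Iic_sub_Iic (hf.mono_set (Iic_subset_Iic.2 hxa.le))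
    (hf.mono_set (Iic_subset_Iic.2 hy.le))]
  abel

section Region

variable {α : Type*} [MeasurableSpace α] {μ : Measure α} [SFinite μ] {f g : α → ℝ}
  {s : Set α}

theorem volume_prod_setOf_mem_Ico_eq_lintegral' (hf : Measurable f) (hg : Measurable g)
    (hs : MeasurableSet s) :
    volume.prod μ {p : ℝ × α | p.2 ∈ s ∧ p.1 ∈ Ico (f p.2) (g p.2)} =
      ∫⁻ y in s, ENNReal.ofReal (g y - f y) ∂μ := by
  have hmeas : MeasurableSet {p : ℝ × α | p.2 ∈ s ∧ p.1 ∈ Ico (f p.2) (g p.2)} :=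
    (measurable_snd hs).inter ((measurableSet_le (hf.comp measurable_snd) measurable_fst).inter
      (measurableSet_lt measurable_fst (hg.comp measurable_snd)))
  rw [Measure.prod_apply_symm hmeas, ← lintegral_indicator hs]
  congr 1 with y
  by_cases hy : y ∈ s
  · rw [indicator_of_mem hy, ← Real.volume_Ico]
    congr 1 with x
    simp [hy]
  · simp [hy]

theorem volume_prod_setOf_mem_Ico_eq_lintegral (hf : AEMeasurable f (μ.restrict s))
    (hg : AEMeasurable g (μ.restrict s)) (hs : MeasurableSet s) :
    volume.prod μ {p : ℝ × α | p.2 ∈ s ∧ p.1 ∈ Ico (f p.2) (g p.2)} =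
      ∫⁻ y in s, ENNReal.ofReal (g y - f y) ∂μ := by
  have hfg : ∀ᵐ y ∂μ, y ∈ s → f y = hf.mk f y ∧ g y = hg.mk g y :=
    (ae_restrict_iff' hs).1 (hf.ae_eq_mk.and hg.ae_eq_mk)
  rw [setLIntegral_congr_fun_ae hs (hfg.mono fun y hy hys => by rw [(hy hys).1, (hy hys).2]),
    ← volume_prod_setOf_mem_Ico_eq_lintegral' hf.measurable_mk hg.measurable_mk hs]
  exact measure_congr ((Measure.quasiMeasurePreserving_snd.ae hfg).mono fun p hp =>
    propext (and_congr_right fun hps => by rw [(hp hps).1, (hp hps).2]))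

end Region

def trawlSet (b : ℝ) (d : ℝ → ℝ) (t : ℝ) : Set (ℝ × ℝ) :=
  {p | p.2 ≤ t ∧ b ≤ p.1 ∧ p.1 < d (p.2 - t)}

section Trawl

variable {b t : ℝ} {d : ℝ → ℝ}

theorem trawlSet_inter_trawlSet_zero (hd_mono : MonotoneOn d (Iic 0)) (ht : 0 ≤ t) :
    trawlSet b d t ∩ trawlSet b d 0 =
      (· + (0, -t)) ⁻¹' {q | q.2 ∈ Iic (-t) ∧ q.1 ∈ Ico b (d q.2)} := by
  ext ⟨x, s⟩
  simp only [trawlSet, mem_inter_iff, mem_ofPred_eq, mem_preimage, Prod.mk_add_mk, add_zero,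
    mem_Iic, mem_Ico, sub_zero, ← sub_eq_add_neg]
  constructor
  · rintro ⟨⟨-, hbx, hx⟩, hs, -⟩
    exact ⟨by linarith, hbx, hx⟩
  · rintro ⟨hs, hbx, hx⟩
    refine ⟨⟨by linarith, hbx, hx⟩, by linarith, hbx, ?_⟩
    exact hx.trans_le (hd_mono (mem_Iic.2 (by linarith)) (mem_Iic.2 (by linarith)) (by linarith))

theorem volume_trawlSet_inter_trawlSet_zero_toReal (hd_mono : MonotoneOn d (Iic 0))
    (hd_lower : ∀ s ≤ 0, b ≤ d s) (hd_int : IntegrableOn (fun s => d s - b) (Iic 0))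
    (ht : 0 ≤ t) :
    (volume (trawlSet b d t ∩ trawlSet b d 0)).toReal = ∫ u in Iic (-t), (d u - b) := by
  have hsub : Iic (-t) ⊆ Iic 0 := Iic_subset_Iic.2 (neg_nonpos.2 ht)
  have hint := hd_int.mono_set hsub
  have hnonneg : ∀ u ∈ Iic (-t), 0 ≤ d u - b := fun u hu =>
    sub_nonneg.2 (hd_lower u (hsub hu))
  rw [trawlSet_inter_trawlSet_zero hd_mono ht, measure_preimage_add_right,
    Measure.volume_eq_prod, volume_prod_setOf_mem_Ico_eq_lintegral aemeasurable_const
      (by simpa using hint.aemeasurable.add_const b) measurableSet_Iic,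
    ← ofReal_integral_eq_lintegral_ofReal hint ((ae_restrict_iff' measurableSet_Iic).2
      (Eventually.of_forall hnonneg)),
    ENNReal.toReal_ofReal (setIntegral_nonneg measurableSet_Iic hnonneg)]

end Trawl

theorem trawl_overlap_area_hasDerivAt_general
    (b : ℝ)
    (d : ℝ → ℝ)
    (hd_cont : ContinuousOn d (Set.Iic 0))
    (hd_mono : MonotoneOn d (Set.Iic 0))
    (hd_range : ∀ s ≤ (0:ℝ), d s ∈ Set.Icc b 1)
    (hd_int : MeasureTheory.IntegrableOn (fun s => d s - b) (Set.Iic 0))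
    (A : ℝ → Set (ℝ × ℝ))
    (hA : ∀ t, A t = {p : ℝ × ℝ | p.2 ≤ t ∧ b ≤ p.1 ∧ p.1 < d (p.2 - t)}) :
    ∀ t > (0:ℝ),
      HasDerivAt (fun t => (volume (A t ∩ A 0)).toReal) (-(d (-t) - b)) t := by
  obtain rfl : A = trawlSet b d := funext hA
  intro t ht
  have hneg : -t < 0 := neg_neg_of_pos ht
  have hF : HasDerivAt (fun y => ∫ u in Iic y, (d u - b)) (d (-t) - b) (-t) :=
    hasDerivAt_setIntegral_Iic hd_int hneg
      ((hd_cont.continuousAt (Iic_mem_nhds hneg)).sub continuousAt_const)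
  have hG : HasDerivAt (fun t => ∫ u in Iic (-t), (d u - b)) (-(d (-t) - b)) t := by
    simpa [Function.comp_def] using hF.scomp t (hasDerivAt_neg t)
  refine hG.congr_of_eventuallyEq ?_
  filter_upwards [Ioi_mem_nhds ht] with s hs
  exact volume_trawlSet_inter_trawlSet_zero_toReal hd_mono (fun u hu => (hd_range u hu).1) hd_int
    hs.le

/-- The overlap-area function `g(t) = leb(A_t ∩ A)` is differentiable at
every `t > 0` with derivative `g'(t) = −(d(−t) − b)`. -/
theorem trawl_overlap_area_hasDerivAt
    (b : ℝ) (hb : b ∈ Set.Icc (0:ℝ) 1)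
    (d : ℝ → ℝ)
    (hd_cont : ContinuousOn d (Set.Iic 0))
    (hd_mono : MonotoneOn d (Set.Iic 0))
    (hd_range : ∀ s ≤ (0:ℝ), d s ∈ Set.Icc b 1)
    (hd0 : d 0 = 1)
    (hd_lim : Filter.Tendsto d Filter.atBot (nhds b))
    (hd_int : MeasureTheory.IntegrableOn (fun s => d s - b) (Set.Iic 0))
    (A : ℝ → Set (ℝ × ℝ))
    (hA : ∀ t, A t = {p : ℝ × ℝ | p.2 ≤ t ∧ b ≤ p.1 ∧ p.1 < d (p.2 - t)}) :
    ∀ t > (0:ℝ),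
      HasDerivAt (fun t => (volume (A t ∩ A 0)).toReal) (-(d (-t) - b)) t :=
  trawl_overlap_area_hasDerivAt_general b d hd_cont hd_mono hd_range hd_int A hA
end

section
/- For every sampling interval δ > 0 and every k = 1, 2, ..., the second difference leb(A_{(k+1)δ} \ A) − 2·leb(A_{kδ} \ A) + leb(A_{(k−1)δ} \ A) is ≤ 0, and is < 0 if d is strictly increasing. Consequently, whenever bδ + 2·leb(A_δ \ A) > 0, the ratio ρ_k(δ) := (leb(A_{(k+1)δ} \ A) − 2·leb(A_{kδ} \ A) + leb(A_{(k−1)δ} \ A)) / (bδ + 2·leb(A_δ \ A)) satisfies ρ_k(δ) ≤ 0, with strict inequality if d is strictly increasing. -/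
/-!
Up to the null line `x = b`, the set `A_t \ A` is the region `b ≤ x < d (s - t)` over
`s ∈ (0, t]`, so `leb (A_t \ A) = ∫_{-t}^0 (d - b)`. The second difference of this primitive with
step `δ` is `∫_{-(t+δ)}^{-t} (d u - d (u + δ)) du`, which is `≤ 0` because `d` increases, and
`< 0` if it increases strictly.
-/

open MeasureTheory Set Filter

section RegionBetween

variable {α : Type*} [MeasurableSpace α] {μ : Measure α} [SigmaFinite μ]

theorem volume_region_between_co_const_eq_integral {c : ℝ} {g : α → ℝ} {s : Set α}
    (hg : IntegrableOn g s μ) (hs : MeasurableSet s) (hμs : μ s ≠ ⊤) (hcg : ∀ x ∈ s, c ≤ g x) :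
    μ.prod volume {p : α × ℝ | p.1 ∈ s ∧ p.2 ∈ Ico c (g p.1)} =
      ENNReal.ofReal (∫ x in s, (g x - c) ∂μ) := by
  have hline : μ.prod volume (univ ×ˢ {c}) = 0 := by
    simp [Measure.prod_prod]
  have hsub : {p : α × ℝ | p.1 ∈ s ∧ p.2 ∈ Ico c (g p.1)} ⊆
      regionBetween (fun _ ↦ c) g s ∪ univ ×ˢ {c} := by
    rintro p ⟨hps, hcp, hpg⟩
    rcases hcp.eq_or_lt with h | h
    · exact Or.inr ⟨trivial, h.symm⟩
    · exact Or.inl ⟨hps, h, hpg⟩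
  have hregion := volume_regionBetween_eq_integral (integrableOn_const hμs) hg hs hcg
  simp only [Pi.sub_apply] at hregion
  rw [← hregion]
  refine le_antisymm ?_ (measure_mono fun p hp ↦ ⟨hp.1, hp.2.1.le, hp.2.2⟩)
  calc _ ≤ μ.prod volume (regionBetween (fun _ ↦ c) g s ∪ univ ×ˢ {c}) := measure_mono hsub
    _ ≤ _ := (measure_union_le _ _).trans (by rw [hline, add_zero])

end RegionBetween

section Trawl

variable {b t : ℝ} {d : ℝ → ℝ}

theorem trawlSet_diff_trawlSet_zero (hd : MonotoneOn d (Iic 0)) (ht : 0 ≤ t) :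
    trawlSet b d t \ trawlSet b d 0 =
      Prod.swap ⁻¹' {q | q.1 ∈ Ioc 0 t ∧ q.2 ∈ Ico b (d (q.1 - t))} := by
  ext ⟨x, s⟩
  simp only [trawlSet, Set.mem_sdiff, mem_ofPred_eq, mem_preimage, Prod.swap_prod_mk, mem_Ioc,
    mem_Ico, sub_zero, not_and, not_lt]
  constructor
  · rintro ⟨⟨hst, hbx, hxd⟩, hnot⟩
    refine ⟨⟨lt_of_not_ge fun hs ↦ ?_, hst⟩, hbx, hxd⟩
    exact (hnot hs hbx).not_gt (hxd.trans_le (hd (mem_Iic.2 (by linarith)) hs (by linarith)))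
  · rintro ⟨⟨hs, hst⟩, hbx, hxd⟩
    exact ⟨⟨hst, hbx, hxd⟩, fun hs' ↦ absurd hs' hs.not_ge⟩

theorem volume_trawlSet_diff (hd : MonotoneOn d (Iic 0)) (hbd : ∀ s ≤ 0, b ≤ d s) (ht : 0 ≤ t) :
    (volume (trawlSet b d t \ trawlSet b d 0)).toReal = ∫ u in -t..0, (d u - b) := by
  have hshift : MonotoneOn (fun x ↦ d (x - t)) (Icc 0 t) :=
    fun x hx y hy hxy ↦ hd (mem_Iic.2 (by linarith [hx.2])) (mem_Iic.2 (by linarith [hy.2]))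
      (by linarith)
  have hint : IntegrableOn (fun x ↦ d (x - t)) (Ioc 0 t) :=
    (hshift.integrableOn_isCompact isCompact_Icc).mono_set Ioc_subset_Icc_self
  rw [trawlSet_diff_trawlSet_zero hd ht, Measure.volume_eq_prod,
    Measure.measurePreserving_swap.measure_preimage_emb
      MeasurableEquiv.prodComm.measurableEmbedding,
    volume_region_between_co_const_eq_integral hint measurableSet_Ioc
      measure_Ioc_lt_top.ne fun x hx ↦ hbd _ (by linarith [hx.2]),
    ENNReal.toReal_ofReal (setIntegral_nonneg measurableSet_Ioc fun x hx ↦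
      sub_nonneg.2 (hbd _ (by linarith [hx.2]))),
    ← intervalIntegral.integral_of_le ht, intervalIntegral.integral_comp_sub_right
      (fun u ↦ d u - b), zero_sub, sub_self]

end Trawl

section Shift

variable {g : ℝ → ℝ} {a c t δ : ℝ}

theorem MonotoneOn.intervalIntegral_le_shift (hg : MonotoneOn g (Icc a (c + δ))) (hac : a ≤ c)
    (hδ : 0 ≤ δ) : ∫ u in a..c, g u ≤ ∫ u in a + δ..c + δ, g u := by
  have hgac : MonotoneOn g (uIcc a c) := hg.mono <| by
    rw [uIcc_of_le hac]; exact Icc_subset_Icc_right (by linarith)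
  have hgδ : MonotoneOn (fun u ↦ g (u + δ)) (uIcc a c) := by
    rw [uIcc_of_le hac]
    exact fun x hx y hy hxy ↦ hg ⟨by linarith [hx.1], by linarith [hx.2]⟩
      ⟨by linarith [hy.1], by linarith [hy.2]⟩ (by linarith)
  rw [← intervalIntegral.integral_comp_add_right]
  exact intervalIntegral.integral_mono_on hac hgac.intervalIntegrable hgδ.intervalIntegrable
    fun u hu ↦ hg ⟨hu.1, by linarith [hu.2]⟩ ⟨by linarith [hu.1], by linarith [hu.2]⟩
      (by linarith)

theorem StrictMonoOn.intervalIntegral_lt_shift (hg : StrictMonoOn g (Icc a (c + δ)))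
    (hac : a < c) (hδ : 0 < δ) : ∫ u in a..c, g u < ∫ u in a + δ..c + δ, g u := by
  have hgac : MonotoneOn g (uIcc a c) := hg.monotoneOn.mono <| by
    rw [uIcc_of_le hac.le]; exact Icc_subset_Icc_right (by linarith)
  have hgδ : MonotoneOn (fun u ↦ g (u + δ)) (uIcc a c) := by
    rw [uIcc_of_le hac.le]
    exact fun x hx y hy hxy ↦ hg.monotoneOn ⟨by linarith [hx.1], by linarith [hx.2]⟩
      ⟨by linarith [hy.1], by linarith [hy.2]⟩ (by linarith)
  rw [← intervalIntegral.integral_comp_add_right, ← sub_pos,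
    ← intervalIntegral.integral_sub hgδ.intervalIntegrable hgac.intervalIntegrable]
  refine intervalIntegral.intervalIntegral_pos_of_pos_on
    (hgδ.intervalIntegrable.sub hgac.intervalIntegrable) (fun u hu ↦ sub_pos.2 ?_) hac
  exact hg ⟨hu.1.le, by linarith [hu.2]⟩ ⟨by linarith [hu.1], by linarith [hu.2]⟩ (by linarith)

theorem intervalIntegral_second_difference_eq_sub_shift (hg : IntegrableOn g (Icc (-(t + δ)) 0))
    (hδ : 0 ≤ δ) (ht : δ ≤ t) :
    (∫ u in -(t + δ)..0, g u) - 2 * (∫ u in -t..0, g u) + ∫ u in -(t - δ)..0, g u =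
      (∫ u in -(t + δ)..-t, g u) - ∫ u in -(t + δ) + δ..-t + δ, g u := by
  have hint : ∀ x ∈ Icc (-(t + δ)) 0, ∀ y ∈ Icc (-(t + δ)) 0, IntervalIntegrable g volume x y :=
    fun x hx y hy ↦ (hg.mono_set (uIcc_subset_Icc hx hy)).intervalIntegrable
  have hmem : ∀ x, -(t + δ) ≤ x → x ≤ 0 → x ∈ Icc (-(t + δ)) 0 := fun x h₁ h₂ ↦ ⟨h₁, h₂⟩
  have h₀ := hmem 0 (by linarith) le_rfl
  have h₁ := hmem (-(t + δ)) le_rfl (by linarith)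
  have h₂ := hmem (-t) (by linarith) (by linarith)
  have h₃ := hmem (-(t - δ)) (by linarith) (by linarith)
  rw [← intervalIntegral.integral_add_adjacent_intervals (hint _ h₁ _ h₂) (hint _ h₂ _ h₀),
    ← intervalIntegral.integral_add_adjacent_intervals (hint _ h₂ _ h₃) (hint _ h₃ _ h₀),
    show -(t + δ) + δ = -t by ring, show -t + δ = -(t - δ) by ring]
  ring

theorem MonotoneOn.intervalIntegral_second_difference_nonpos (hg : MonotoneOn g (Iic 0))
    (hδ : 0 ≤ δ) (ht : δ ≤ t) :
    (∫ u in -(t + δ)..0, g u) - 2 * (∫ u in -t..0, g u) + ∫ u in -(t - δ)..0, g u ≤ 0 := by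
  rw [intervalIntegral_second_difference_eq_sub_shift
    ((hg.mono Icc_subset_Iic_self).integrableOn_isCompact isCompact_Icc) hδ ht, sub_nonpos]
  exact (hg.mono fun x hx ↦ mem_Iic.2 (by linarith [hx.2])).intervalIntegral_le_shift
    (by linarith) hδ

theorem StrictMonoOn.intervalIntegral_second_difference_neg (hg : StrictMonoOn g (Iic 0))
    (hδ : 0 < δ) (ht : δ ≤ t) :
    (∫ u in -(t + δ)..0, g u) - 2 * (∫ u in -t..0, g u) + ∫ u in -(t - δ)..0, g u < 0 := by
  rw [intervalIntegral_second_difference_eq_sub_shift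
    ((hg.monotoneOn.mono Icc_subset_Iic_self).integrableOn_isCompact isCompact_Icc) hδ.le ht,
    sub_neg]
  exact (hg.mono fun x hx ↦ mem_Iic.2 (by linarith [hx.2])).intervalIntegral_lt_shift
    (by linarith) hδ

end Shift

theorem trawl_second_difference_nonpos_general
    (b : ℝ)
    (d : ℝ → ℝ)
    (hd_mono : MonotoneOn d (Set.Iic 0))
    (hd_range : ∀ s ≤ (0:ℝ), d s ∈ Set.Icc b 1)
    (A : ℝ → Set (ℝ × ℝ))
    (hA : ∀ t, A t = {p : ℝ × ℝ | p.2 ≤ t ∧ b ≤ p.1 ∧ p.1 < d (p.2 - t)})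
    (F : ℝ → ℝ)
    (hF : ∀ t, F t = (volume (A t \ A 0)).toReal) :
    ∀ δ > (0:ℝ), ∀ k : ℕ, 1 ≤ k →
      (F (((k:ℝ)+1)*δ) - 2 * F ((k:ℝ)*δ) + F (((k:ℝ)-1)*δ) ≤ 0) ∧
      (StrictMonoOn d (Set.Iic 0) →
        F (((k:ℝ)+1)*δ) - 2 * F ((k:ℝ)*δ) + F (((k:ℝ)-1)*δ) < 0) ∧
      (b * δ + 2 * F δ > 0 →
        (F (((k:ℝ)+1)*δ) - 2 * F ((k:ℝ)*δ) + F (((k:ℝ)-1)*δ)) / (b * δ + 2 * F δ) ≤ 0 ∧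
        (StrictMonoOn d (Set.Iic 0) →
          (F (((k:ℝ)+1)*δ) - 2 * F ((k:ℝ)*δ) + F (((k:ℝ)-1)*δ)) / (b * δ + 2 * F δ) < 0)) := by
  obtain rfl : A = trawlSet b d := funext hA
  have hF_eq : ∀ t, 0 ≤ t → F t = ∫ u in -t..0, (d u - b) := fun t ht ↦
    (hF t).trans (volume_trawlSet_diff hd_mono (fun s hs ↦ (hd_range s hs).1) ht)
  intro δ hδ k hk
  have hδt : δ ≤ k * δ := le_mul_of_one_le_left hδ.le (by exact_mod_cast hk)
  have hdiff : F ((k + 1) * δ) - 2 * F (k * δ) + F ((k - 1) * δ) =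
      (∫ u in -(k * δ + δ)..0, (d u - b)) - 2 * (∫ u in -(k * δ)..0, (d u - b)) +
        ∫ u in -(k * δ - δ)..0, (d u - b) := by
    rw [add_one_mul, sub_one_mul, hF_eq _ (by linarith), hF_eq _ (by linarith),
      hF_eq _ (by linarith)]
  have hle := MonotoneOn.intervalIntegral_second_difference_nonpos
    (fun x hx y hy hxy ↦ sub_le_sub_right (hd_mono hx hy hxy) b) hδ.le hδt
  have hlt : StrictMonoOn d (Iic 0) → _ := fun hd_strict ↦
    StrictMonoOn.intervalIntegral_second_difference_neg
      (fun x hx y hy hxy ↦ sub_lt_sub_right (hd_strict hx hy hxy) b) hδ hδt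
  rw [hdiff]
  exact ⟨hle, hlt, fun hden ↦ ⟨div_nonpos_of_nonpos_of_nonneg hle hden.le,
    fun hd_strict ↦ div_neg_of_neg_of_pos (hlt hd_strict) hden⟩⟩

/-- For every sampling interval `δ > 0` and every `k = 1, 2, ...`, the
second difference `leb(A_{(k+1)δ} \ A) − 2 leb(A_{kδ} \ A) + leb(A_{(k−1)δ} \ A)` is `≤ 0`,
and `< 0` if `d` is strictly increasing.  Consequently, whenever `bδ + 2 leb(A_δ \ A) > 0`,
the autocorrelation `ρ_k(δ)` of price changes is `≤ 0`, with strict inequality if `d` is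
strictly increasing. -/
theorem trawl_second_difference_nonpos
    (b : ℝ) (hb : b ∈ Set.Icc (0:ℝ) 1)
    (d : ℝ → ℝ)
    (hd_cont : ContinuousOn d (Set.Iic 0))
    (hd_mono : MonotoneOn d (Set.Iic 0))
    (hd_range : ∀ s ≤ (0:ℝ), d s ∈ Set.Icc b 1)
    (hd0 : d 0 = 1)
    (hd_lim : Filter.Tendsto d Filter.atBot (nhds b))
    (hd_int : MeasureTheory.IntegrableOn (fun s => d s - b) (Set.Iic 0))
    (A : ℝ → Set (ℝ × ℝ))
    (hA : ∀ t, A t = {p : ℝ × ℝ | p.2 ≤ t ∧ b ≤ p.1 ∧ p.1 < d (p.2 - t)})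
    (F : ℝ → ℝ)
    (hF : ∀ t, F t = (volume (A t \ A 0)).toReal) :
    ∀ δ > (0:ℝ), ∀ k : ℕ, 1 ≤ k →
      (F (((k:ℝ)+1)*δ) - 2 * F ((k:ℝ)*δ) + F (((k:ℝ)-1)*δ) ≤ 0) ∧
      (StrictMonoOn d (Set.Iic 0) →
        F (((k:ℝ)+1)*δ) - 2 * F ((k:ℝ)*δ) + F (((k:ℝ)-1)*δ) < 0) ∧
      (b * δ + 2 * F δ > 0 →
        (F (((k:ℝ)+1)*δ) - 2 * F ((k:ℝ)*δ) + F (((k:ℝ)-1)*δ)) / (b * δ + 2 * F δ) ≤ 0 ∧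
        (StrictMonoOn d (Set.Iic 0) →
          (F (((k:ℝ)+1)*δ) - 2 * F ((k:ℝ)*δ) + F (((k:ℝ)-1)*δ)) / (b * δ + 2 * F δ) < 0)) :=
  trawl_second_difference_nonpos_general b d hd_mono hd_range A hA F hF
end

section
/- Let (Z_t)_{t ≥ 0} be a real-valued stochastic process with square-integrable and covariance-stationary increments, i.e. Cov(Z_{t+h} − Z_{s+h}, Z_{v+h} − Z_{u+h}) = Cov(Z_t − Z_s, Z_v − Z_u) for all admissible s, t, u, v, h ≥ 0, and suppose there are constants b, κ ∈ ℝ and a function F : [0,∞) → ℝ such that Var(Z_t − Z_0) = (bt + 2F(t))·κ for all t ≥ 0. Then for every δ > 0 and k = 1, 2, ..., the autocovariance γ_k := Cov(Z_{(k+1)δ} − Z_{kδ}, Z_δ − Z_0) equals (F((k+1)δ) − 2F(kδ) + F((k−1)δ))·κ, and if (bδ + 2F(δ))·κ > 0 then the autocorrelation of increments equals (F((k+1)δ) − 2F(kδ) + F((k−1)δ)) / (bδ + 2F(δ)). -/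
open MeasureTheory

/-!
The increments `Z t - Z 0` all start at time `0`, so by polarization their covariances are
determined by the variances of increments, which by stationarity depend only on the lag:
`Cov(Z s - Z 0, Z t - Z 0) = (V s + V t - V (t - s)) / 2` with `V t = Var(Z t - Z 0)`.
Writing `Z (t + δ) - Z t` as a difference of two increments from `0` turns the autocovariance
into the second difference `(V (t + δ) - 2 V t + V (t - δ)) / 2`, in which the linear part
`b t κ` of `V` cancels.
-/

section

open ProbabilityTheory

variable {Ω : Type*} [MeasurableSpace Ω] {μ : Measure Ω} [IsFiniteMeasure μ]

lemma two_mul_covariance_eq {X Y : Ω → ℝ} (hX : MemLp X 2 μ) (hY : MemLp Y 2 μ) :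
    2 * cov[X, Y; μ] = cov[X, X; μ] + cov[Y, Y; μ] - cov[X - Y, X - Y; μ] := by
  rw [covariance_sub_sub hX hY hX hY, covariance_comm (X := Y) (Y := X)]
  ring

lemma covariance_sub_zero_sub_zero {Z : ℝ → Ω → ℝ} {V : ℝ → ℝ}
    (hL2 : ∀ t, 0 ≤ t → MemLp (Z t - Z 0) 2 μ)
    (hV : ∀ s t, 0 ≤ s → s ≤ t → cov[Z t - Z s, Z t - Z s; μ] = V (t - s))
    {s t : ℝ} (hs : 0 ≤ s) (hst : s ≤ t) :
    cov[Z s - Z 0, Z t - Z 0; μ] = (V s + V t - V (t - s)) / 2 := by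
  have ht : 0 ≤ t := hs.trans hst
  have hV₀ : ∀ r, 0 ≤ r → cov[Z r - Z 0, Z r - Z 0; μ] = V r := fun r hr => by
    simpa using hV 0 r le_rfl hr
  have hdiff : (Z s - Z 0) - (Z t - Z 0) = -(Z t - Z s) := by abel
  have h := two_mul_covariance_eq (hL2 s hs) (hL2 t ht)
  rw [hdiff, covariance_neg_left, covariance_neg_right, neg_neg, hV s t hs hst,
    hV₀ s hs, hV₀ t ht] at h
  linarith

lemma covariance_increment_increment {Z : ℝ → Ω → ℝ} {V : ℝ → ℝ}
    (hL2 : ∀ t, 0 ≤ t → MemLp (Z t - Z 0) 2 μ)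
    (hV : ∀ s t, 0 ≤ s → s ≤ t → cov[Z t - Z s, Z t - Z s; μ] = V (t - s))
    {δ t : ℝ} (hδ : 0 ≤ δ) (hδt : δ ≤ t) :
    cov[Z (t + δ) - Z t, Z δ - Z 0; μ] = (V (t + δ) - 2 * V t + V (t - δ)) / 2 := by
  have ht : 0 ≤ t := hδ.trans hδt
  have hdec : Z (t + δ) - Z t = (Z (t + δ) - Z 0) - (Z t - Z 0) := by abel
  rw [hdec, covariance_sub_left (hL2 _ (by linarith)) (hL2 t ht) (hL2 δ hδ),
    covariance_comm, covariance_sub_zero_sub_zero hL2 hV hδ (by linarith),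
    covariance_comm, covariance_sub_zero_sub_zero hL2 hV hδ hδt, add_sub_cancel_right]
  ring

end

/-- If `(Z_t)_{t ≥ 0}` has square-integrable, covariance-stationary
increments and `Var(Z_t − Z_0) = (bt + 2F(t))·κ` for all `t ≥ 0`, then for every `δ > 0`
and `k = 1, 2, ...`, the autocovariance `γ_k = Cov(Z_{(k+1)δ} − Z_{kδ}, Z_δ − Z_0)` equals
`(F((k+1)δ) − 2F(kδ) + F((k−1)δ))·κ`, and if `(bδ + 2F(δ))·κ > 0` then the autocorrelation
equals `(F((k+1)δ) − 2F(kδ) + F((k−1)δ)) / (bδ + 2F(δ))`. -/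
theorem autocovariance_of_price_changes
    {Ω : Type*} [MeasurableSpace Ω] (ℙ : Measure Ω) [IsProbabilityMeasure ℙ]
    (Z : ℝ → Ω → ℝ)
    (hL2 : ∀ s t : ℝ, 0 ≤ s → 0 ≤ t → MeasureTheory.MemLp (Z t - Z s) 2 ℙ)
    (Cov : (Ω → ℝ) → (Ω → ℝ) → ℝ)
    (hCov : ∀ X Y : Ω → ℝ,
      Cov X Y = ∫ ω, (X ω - ∫ ω', X ω' ∂ℙ) * (Y ω - ∫ ω', Y ω' ∂ℙ) ∂ℙ)
    (hstat : ∀ s t u v h : ℝ, 0 ≤ s → 0 ≤ t → 0 ≤ u → 0 ≤ v → 0 ≤ h →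
      Cov (Z (t+h) - Z (s+h)) (Z (v+h) - Z (u+h)) = Cov (Z t - Z s) (Z v - Z u))
    (b κ : ℝ) (F : ℝ → ℝ)
    (hVar : ∀ t ≥ (0:ℝ), Cov (Z t - Z 0) (Z t - Z 0) = (b * t + 2 * F t) * κ) :
    ∀ δ > (0:ℝ), ∀ k : ℕ, 1 ≤ k →
      Cov (Z (((k:ℝ)+1)*δ) - Z ((k:ℝ)*δ)) (Z δ - Z 0) =
        (F (((k:ℝ)+1)*δ) - 2 * F ((k:ℝ)*δ) + F (((k:ℝ)-1)*δ)) * κ ∧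
      ((b * δ + 2 * F δ) * κ > 0 →
        Cov (Z (((k:ℝ)+1)*δ) - Z ((k:ℝ)*δ)) (Z δ - Z 0) / ((b * δ + 2 * F δ) * κ) =
          (F (((k:ℝ)+1)*δ) - 2 * F ((k:ℝ)*δ) + F (((k:ℝ)-1)*δ)) / (b * δ + 2 * F δ)) := by
  have hCov_eq : Cov = fun X Y => ProbabilityTheory.covariance X Y ℙ := by
    funext X Y; exact hCov X Y
  subst hCov_eq
  beta_reduce at hstat hVar ⊢
  have hlag : ∀ s t : ℝ, 0 ≤ s → s ≤ t → ProbabilityTheory.covariance (Z t - Z s) (Z t - Z s) ℙ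
      = (b * (t - s) + 2 * F (t - s)) * κ := fun s t hs hst => by
    have h := hstat 0 (t - s) 0 (t - s) s le_rfl (by linarith) le_rfl (by linarith) hs
    rw [sub_add_cancel, zero_add] at h
    rw [h, hVar _ (by linarith)]
  intro δ hδ k hk
  have hk' : (1 : ℝ) ≤ k := by exact_mod_cast hk
  have hγ := covariance_increment_increment (V := fun t => (b * t + 2 * F t) * κ)
    (fun t ht => hL2 0 t le_rfl ht) hlag hδ.le (le_mul_of_one_le_left hδ.le hk')
  rw [show (k : ℝ) * δ + δ = ((k : ℝ) + 1) * δ by ring,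
    show (k : ℝ) * δ - δ = ((k : ℝ) - 1) * δ by ring] at hγ
  have hγ' : ProbabilityTheory.covariance (Z (((k:ℝ)+1)*δ) - Z ((k:ℝ)*δ)) (Z δ - Z 0) ℙ =
      (F (((k:ℝ)+1)*δ) - 2 * F ((k:ℝ)*δ) + F (((k:ℝ)-1)*δ)) * κ := by
    rw [hγ]; ring
  refine ⟨hγ', fun hpos => ?_⟩
  have hκ : κ ≠ 0 := by rintro rfl; simp at hpos
  rw [hγ', mul_div_mul_right _ _ hκ]
end

section
/- For the superposition trawl, for every t ≥ 0 the overlap area equals leb(A_t ∩ A) = (1 − b)·∫_0^∞ (e^{−tλ}/λ) π(dλ). -/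
open MeasureTheory Set Filter

/-! Since `d` is nondecreasing on `(-∞, 0]`, the overlap `A_t ∩ A` is the region
`{(x, s) : s ≤ 0, b ≤ x < d (s - t)}`. Its slice at height `s` has length
`d (s - t) - b = (1 - b) ∫ e^{λ (s - t)} π(dλ)`, so by Tonelli the area is
`(1 - b) ∫ (∫_{-∞}^{-t} e^{λ u} du) π(dλ) = (1 - b) ∫ e^{-tλ}/λ π(dλ)`. -/

lemma volume_setOf_snd_mem_fst_mem_Ico {f g : ℝ → ℝ} {s : Set ℝ} (hf : Measurable f)
    (hg : Measurable g) (hs : MeasurableSet s) :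
    volume {p : ℝ × ℝ | p.2 ∈ s ∧ p.1 ∈ Ico (f p.2) (g p.2)}
      = ∫⁻ y in s, ENNReal.ofReal (g y - f y) := by
  have hmeas : MeasurableSet {p : ℝ × ℝ | p.2 ∈ s ∧ p.1 ∈ Ico (f p.2) (g p.2)} :=
    (measurable_snd hs).inter
      ((measurableSet_le (hf.comp measurable_snd) measurable_fst).inter
        (measurableSet_lt measurable_fst (hg.comp measurable_snd)))
  rw [Measure.volume_eq_prod, Measure.prod_apply_symm hmeas, ← lintegral_indicator hs]
  refine lintegral_congr fun y => ?_
  by_cases hy : y ∈ s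
  · rw [indicator_of_mem hy, ← Real.volume_Ico]
    congr 1 with x
    simp [hy]
  · simp [hy]

lemma setLIntegral_Iic_comp_sub_right (f : ℝ → ENNReal) (c t : ℝ) :
    ∫⁻ s in Iic c, f (s - t) = ∫⁻ u in Iic (c - t), f u := by
  have := (measurePreserving_sub_right volume t).setLIntegral_comp_preimage_emb
    (measurableEmbedding_subRight t) f (Iic (c - t))
  rwa [preimage_sub_const_Iic, sub_add_cancel] at this

lemma lintegral_exp_mul_Iic {a : ℝ} (ha : 0 < a) (c : ℝ) :
    ∫⁻ x in Iic c, ENNReal.ofReal (Real.exp (a * x)) = ENNReal.ofReal (Real.exp (a * c) / a) := by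
  rw [← ofReal_integral_eq_lintegral_ofReal (integrableOn_exp_mul_Iic ha c)
    (ae_of_all _ fun _ => Real.exp_nonneg _), integral_exp_mul_Iic ha c]

section ExponentialMixture

variable {π : Measure ℝ}

lemma integrable_exp_mul_of_nonpos [IsFiniteMeasure π] (hπ : ∀ᵐ l ∂π, 0 < l) {s : ℝ}
    (hs : s ≤ 0) : Integrable (fun l => Real.exp (l * s)) π := by
  refine (integrable_const 1).mono' (by fun_prop) ?_
  filter_upwards [hπ] with l hl
  rw [Real.norm_of_nonneg (Real.exp_nonneg _), Real.exp_le_one_iff]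
  exact mul_nonpos_of_nonneg_of_nonpos hl.le hs

lemma monotoneOn_integral_exp_mul [IsFiniteMeasure π] (hπ : ∀ᵐ l ∂π, 0 < l) :
    MonotoneOn (fun s => ∫ l, Real.exp (l * s) ∂π) (Iic 0) := by
  intro s₁ hs₁ s₂ hs₂ hs
  refine integral_mono_ae (integrable_exp_mul_of_nonpos hπ hs₁)
    (integrable_exp_mul_of_nonpos hπ hs₂) ?_
  filter_upwards [hπ] with l hl
  exact Real.exp_le_exp.2 (mul_le_mul_of_nonneg_left hs hl.le)

lemma measurable_integral_exp_mul [SFinite π] :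
    Measurable fun s => ∫ l, Real.exp (l * s) ∂π :=
  (Measurable.stronglyMeasurable (by fun_prop :
    Measurable (Function.uncurry fun s l : ℝ => Real.exp (l * s)))).integral_prod_right.measurable

lemma lintegral_Iic_integral_exp_mul [IsFiniteMeasure π] (hπ : ∀ᵐ l ∂π, 0 < l) {c : ℝ}
    (hc : c ≤ 0) :
    ∫⁻ s in Iic c, ENNReal.ofReal (∫ l, Real.exp (l * s) ∂π)
      = ∫⁻ l, ENNReal.ofReal (Real.exp (l * c) / l) ∂π :=
  calc ∫⁻ s in Iic c, ENNReal.ofReal (∫ l, Real.exp (l * s) ∂π)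
      = ∫⁻ s in Iic c, ∫⁻ l, ENNReal.ofReal (Real.exp (l * s)) ∂π :=
        setLIntegral_congr_fun measurableSet_Iic fun s hs =>
          ofReal_integral_eq_lintegral_ofReal (integrable_exp_mul_of_nonpos hπ (le_trans hs hc))
            (ae_of_all _ fun _ => Real.exp_nonneg _)
    _ = ∫⁻ l, (∫⁻ s in Iic c, ENNReal.ofReal (Real.exp (l * s))) ∂π :=
        lintegral_lintegral_swap (by fun_prop :
          Measurable (Function.uncurry fun s l : ℝ => ENNReal.ofReal (Real.exp (l * s)))).aemeasurable
    _ = ∫⁻ l, ENNReal.ofReal (Real.exp (l * c) / l) ∂π :=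
        lintegral_congr_ae (hπ.mono fun l hl => lintegral_exp_mul_Iic hl c)

lemma integrable_exp_neg_mul_div (hπ : ∀ᵐ l ∂π, 0 < l) (hπinv : Integrable (fun l => l⁻¹) π)
    {t : ℝ} (ht : 0 ≤ t) : Integrable (fun l => Real.exp (-t * l) / l) π := by
  refine hπinv.mono
    (by fun_prop : Measurable fun l : ℝ => Real.exp (-t * l) / l).aestronglyMeasurable ?_
  filter_upwards [hπ] with l hl
  rw [Real.norm_of_nonneg (by positivity), Real.norm_of_nonneg (by positivity), div_eq_mul_inv]
  exact mul_le_of_le_one_left (by positivity) (Real.exp_le_one_iff.2 (by nlinarith))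

end ExponentialMixture

def squashedTrawl (b : ℝ) (d : ℝ → ℝ) (t : ℝ) : Set (ℝ × ℝ) :=
  {p | p.2 ≤ t ∧ b ≤ p.1 ∧ p.1 < d (p.2 - t)}

lemma squashedTrawl_inter_zero {b : ℝ} {d : ℝ → ℝ} (hd : MonotoneOn d (Iic 0)) {t : ℝ}
    (ht : 0 ≤ t) :
    squashedTrawl b d t ∩ squashedTrawl b d 0
      = {p : ℝ × ℝ | p.2 ∈ Iic 0 ∧ p.1 ∈ Ico b (d (p.2 - t))} := by
  ext ⟨x, s⟩
  simp only [squashedTrawl, mem_inter_iff, mem_ofPred_eq, mem_Iic, mem_Ico, sub_zero]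
  constructor
  · rintro ⟨⟨-, hbx, hx⟩, hs, -⟩
    exact ⟨hs, hbx, hx⟩
  · rintro ⟨hs, hbx, hx⟩
    have hshift : d (s - t) ≤ d s := hd (by simp only [mem_Iic]; linarith) hs (by linarith)
    exact ⟨⟨by linarith, hbx, hx⟩, hs, hbx, hx.trans_le hshift⟩

/-- For the superposition trawl, for every `t ≥ 0` the overlap area
equals `leb(A_t ∩ A) = (1 − b)·∫ (e^{−tλ}/λ) π(dλ)`. -/
theorem superposition_trawl_overlap_area
    (b : ℝ) (hb : b ∈ Set.Ico (0:ℝ) 1)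
    (π : Measure ℝ) [IsProbabilityMeasure π]
    (hπ0 : π (Set.Iic 0) = 0)
    (hπint : MeasureTheory.Integrable (fun l => l⁻¹) π)
    (d : ℝ → ℝ)
    (hd : ∀ s : ℝ, d s = b + (1 - b) * ∫ l, Real.exp (l * s) ∂π)
    (A : ℝ → Set (ℝ × ℝ))
    (hA : ∀ t, A t = {p : ℝ × ℝ | p.2 ≤ t ∧ b ≤ p.1 ∧ p.1 < d (p.2 - t)}) :
    ∀ t ≥ (0:ℝ),
      volume (A t ∩ A 0) = ENNReal.ofReal ((1 - b) * ∫ l, Real.exp (-t * l) / l ∂π) := by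
  intro t ht
  have h1b : 0 ≤ 1 - b := by linarith [hb.2]
  have hπ : ∀ᵐ l ∂π, 0 < l := by
    filter_upwards [measure_eq_zero_iff_ae_notMem.1 hπ0] with l hl
    exact not_le.1 hl
  have hd_mono : MonotoneOn d (Iic 0) := fun s₁ hs₁ s₂ hs₂ hs => by
    rw [hd, hd]
    gcongr b + (1 - b) * ?_
    exact monotoneOn_integral_exp_mul hπ hs₁ hs₂ hs
  have hd_meas : Measurable d := by
    rw [funext hd]
    exact measurable_const.add (measurable_const.mul measurable_integral_exp_mul)
  rw [show A = squashedTrawl b d from funext hA, squashedTrawl_inter_zero hd_mono ht,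
    volume_setOf_snd_mem_fst_mem_Ico (f := fun _ => b) (g := fun s => d (s - t)) measurable_const
      (hd_meas.comp (measurable_sub_const t)) measurableSet_Iic,
    setLIntegral_Iic_comp_sub_right (fun u => ENNReal.ofReal (d u - b)), zero_sub]
  simp_rw [hd, add_sub_cancel_left, ENNReal.ofReal_mul h1b]
  rw [lintegral_const_mul' _ _ ENNReal.ofReal_ne_top,
    lintegral_Iic_integral_exp_mul hπ (neg_nonpos.2 ht),
    ofReal_integral_eq_lintegral_ofReal (integrable_exp_neg_mul_div hπ hπint ht)
      (hπ.mono fun l hl => by positivity)]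
  simp_rw [mul_comm _ (-t)]
end

section
/- For the exponential trawl function d(s) := b + (1−b)·exp(λs) with λ > 0 and b ∈ [0,1], the associated squashed trawl A satisfies leb(A) = (1 − b)/λ and, for every t ≥ 0, leb(A_t ∩ A) = ((1 − b)/λ)·e^{−λt}. -/
open MeasureTheory Set Filter

/-!
Since `d` is increasing, `A_t ∩ A` is the region over `s ≤ 0` between the levels `b` and
`d (s - t)`. By Fubini its area is `∫_{-∞}^0 (1 - b) e^{λ(s - t)} ds = (1 - b) e^{-λt} / λ`,
and `t = 0` gives `leb(A)`.
-/

theorem measurableSet_setOf_snd_mem_and_fst_mem_Ico {α : Type*} [MeasurableSpace α]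
    {f g : α → ℝ} {s : Set α} (hf : Measurable f) (hg : Measurable g) (hs : MeasurableSet s) :
    MeasurableSet {p : ℝ × α | p.2 ∈ s ∧ p.1 ∈ Ico (f p.2) (g p.2)} :=
  (hs.preimage measurable_snd).inter <|
    (measurableSet_le (hf.comp measurable_snd) measurable_fst).inter
      (measurableSet_lt measurable_fst (hg.comp measurable_snd))

theorem volume_prod_setOf_snd_mem_and_fst_mem_Ico {α : Type*} [MeasurableSpace α]
    {μ : Measure α} [SFinite μ] {f g : α → ℝ} {s : Set α}
    (hf : Measurable f) (hg : Measurable g) (hs : MeasurableSet s) :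
    (volume.prod μ) {p : ℝ × α | p.2 ∈ s ∧ p.1 ∈ Ico (f p.2) (g p.2)} =
      ∫⁻ y in s, ENNReal.ofReal (g y - f y) ∂μ := by
  rw [Measure.prod_apply_symm (measurableSet_setOf_snd_mem_and_fst_mem_Ico hf hg hs),
    ← lintegral_indicator hs]
  refine lintegral_congr fun y => ?_
  by_cases hy : y ∈ s
  · rw [indicator_of_mem hy, ← Real.volume_Ico]
    congr 1
    ext x
    simp [hy]
  · simp [hy]

theorem lintegral_ofReal_mul_exp_mul_Iic {a c : ℝ} (ha : 0 < a) (hc : 0 ≤ c) (u : ℝ) :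
    ∫⁻ s in Iic u, ENNReal.ofReal (c * Real.exp (a * s)) =
      ENNReal.ofReal (c * Real.exp (a * u) / a) := by
  rw [← ofReal_integral_eq_lintegral_ofReal ((integrableOn_exp_mul_Iic ha u).const_mul c)
      (Eventually.of_forall fun s => by positivity),
    integral_const_mul, integral_exp_mul_Iic ha, mul_div_assoc]

theorem squashedTrawl_inter_squashedTrawl_zero {b t : ℝ} {d : ℝ → ℝ} (hd : Monotone d)
    (ht : 0 ≤ t) :
    squashedTrawl b d t ∩ squashedTrawl b d 0 =
      {p | p.2 ∈ Iic 0 ∧ p.1 ∈ Ico b (d (p.2 - t))} := by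
  ext ⟨x, s⟩
  simp only [squashedTrawl, mem_inter_iff, mem_ofPred_eq, mem_Iic, mem_Ico, sub_zero]
  constructor
  · rintro ⟨⟨-, hbx, hxt⟩, hs, -⟩
    exact ⟨hs, hbx, hxt⟩
  · rintro ⟨hs, hbx, hxt⟩
    exact ⟨⟨hs.trans ht, hbx, hxt⟩, hs, hbx, hxt.trans_le (hd (by linarith))⟩

theorem volume_squashedTrawl_inter_squashedTrawl_zero {b t : ℝ} {d : ℝ → ℝ} (hd : Monotone d)
    (ht : 0 ≤ t) :
    volume (squashedTrawl b d t ∩ squashedTrawl b d 0) =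
      ∫⁻ s in Iic 0, ENNReal.ofReal (d (s - t) - b) := by
  rw [squashedTrawl_inter_squashedTrawl_zero hd ht, Measure.volume_eq_prod]
  exact volume_prod_setOf_snd_mem_and_fst_mem_Ico measurable_const
    (hd.measurable.comp (measurable_sub_const t)) measurableSet_Iic

/-- For the exponential trawl function `d(s) = b + (1−b)·e^{λs}` with
`λ > 0` and `b ∈ [0,1]`, the squashed trawl `A` satisfies `leb(A) = (1 − b)/λ` and, for
every `t ≥ 0`, `leb(A_t ∩ A) = ((1 − b)/λ)·e^{−λt}`. -/
theorem exponential_trawl_areas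
    (b lam : ℝ) (hb : b ∈ Set.Icc (0:ℝ) 1) (hlam : 0 < lam)
    (d : ℝ → ℝ)
    (hd : ∀ s : ℝ, d s = b + (1 - b) * Real.exp (lam * s))
    (A : ℝ → Set (ℝ × ℝ))
    (hA : ∀ t, A t = {p : ℝ × ℝ | p.2 ≤ t ∧ b ≤ p.1 ∧ p.1 < d (p.2 - t)}) :
    volume (A 0) = ENNReal.ofReal ((1 - b) / lam) ∧
    ∀ t ≥ (0:ℝ),
      volume (A t ∩ A 0) = ENNReal.ofReal ((1 - b) / lam * Real.exp (-lam * t)) := by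
  obtain rfl : A = squashedTrawl b d := funext hA
  have hb1 : 0 ≤ 1 - b := sub_nonneg.2 hb.2
  have hd_mono : Monotone d := fun s s' hss' => by
    simp only [hd]
    gcongr
  have hinter : ∀ t ≥ (0:ℝ), volume (squashedTrawl b d t ∩ squashedTrawl b d 0) =
      ENNReal.ofReal ((1 - b) / lam * Real.exp (-lam * t)) := fun t ht => by
    have hd_shift : ∀ s, d (s - t) - b = (1 - b) * Real.exp (-lam * t) * Real.exp (lam * s) :=
      fun s => by rw [hd, mul_assoc, ← Real.exp_add]; ring_nf
    simp_rw [volume_squashedTrawl_inter_squashedTrawl_zero hd_mono ht, hd_shift]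
    rw [lintegral_ofReal_mul_exp_mul_Iic hlam (by positivity), mul_zero, Real.exp_zero]
    congr 1
    ring
  refine ⟨?_, hinter⟩
  simpa using hinter 0 le_rfl
end

section
/- Fix b ∈ (0,1], β ∈ ℝ, r ≥ 0, and a function α : ℤ∖{0} → ℝ with Σ_{y ∈ ℤ∖{0}} |y|^r·|α_y| < ∞, and define ν̂(y) := (α_y − (1−b)·α_{−y})·β/((2−b)·b) for y ∈ ℤ∖{0}. Then (2 − b)·Σ_{y ∈ ℤ∖{0}} |y|^r·ν̂(y) = β·Σ_{y ∈ ℤ∖{0}} |y|^r·α_y; in particular, this quantity does not depend on b. -/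
/-! Since the weight `|y|^r` is even, reflecting `y ↦ -y` identifies the moment of `α_{-y}` with
that of `α_y`, so the moment of `α_y − (1−b)·α_{−y}` is `b` times the moment of `α`; the factor
`b·(2−b)` then cancels against the normalisation of `ν̂`. -/

theorem tsum_mul_sub_mul_comp_neg {G : Type*} [InvolutiveNeg G] {w f : G → ℝ}
    (hw : ∀ y, w (-y) = w y) (hf : Summable fun y => w y * f y) (c : ℝ) :
    ∑' y, w y * (f y - c * f (-y)) = (1 - c) * ∑' y, w y * f y := by
  have hf_neg : Summable fun y => w y * f (-y) := by
    simpa only [Function.comp_def, Equiv.neg_apply, hw] using (Equiv.neg G).summable_iff.mpr hf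
  have htsum_neg : ∑' y, w y * f (-y) = ∑' y, w y * f y := by
    rw [← tsum_comp_neg fun y => w y * f y]
    simp only [hw]
  calc ∑' y, w y * (f y - c * f (-y)) = ∑' y, (w y * f y - c * (w y * f (-y))) := by
        congr with y; ring
    _ = (1 - c) * ∑' y, w y * f y := by
        rw [hf.tsum_sub (hf_neg.mul_left c), tsum_mul_left, htsum_neg]; ring

theorem levy_measure_estimator_moments_independent_of_b_general
    (b β r : ℝ) (hb : b ∈ Set.Ioc (0:ℝ) 1)
    (α : ℤ → ℝ)
    (hsum : Summable (fun y : ℤ => |(y : ℝ)| ^ r * |α y|))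
    (ν : ℤ → ℝ)
    (hν : ∀ y : ℤ, ν y = (α y - (1 - b) * α (-y)) * β / ((2 - b) * b)) :
    (2 - b) * ∑' y : ℤ, |(y : ℝ)| ^ r * ν y = β * ∑' y : ℤ, |(y : ℝ)| ^ r * α y := by
  obtain ⟨hb0, hb1⟩ := hb
  have hmoment : Summable fun y : ℤ => |(y : ℝ)| ^ r * α y :=
    Summable.of_abs <| by
      simpa [abs_mul, abs_of_nonneg (Real.rpow_nonneg (abs_nonneg _) r)] using hsum
  calc (2 - b) * ∑' y : ℤ, |(y : ℝ)| ^ r * ν y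
      = (2 - b) * (β / ((2 - b) * b)) * ∑' y : ℤ, |(y : ℝ)| ^ r * (α y - (1 - b) * α (-y)) := by
        rw [mul_assoc, ← tsum_mul_left (a := β / ((2 - b) * b))]
        exact congrArg _ (tsum_congr fun y => by rw [hν]; ring)
    _ = β * ∑' y : ℤ, |(y : ℝ)| ^ r * α y := by
        rw [tsum_mul_sub_mul_comp_neg (fun y => by simp) hmoment]
        field_simp [show (2 : ℝ) - b ≠ 0 by linarith]
        ring

/-- With `ν̂(y) = (α_y − (1−b)·α_{−y})·β/((2−b)·b)` for non-zero integers
`y` (encoded by a function `α : ℤ → ℝ` vanishing at `0`), one has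
`(2 − b)·Σ_y |y|^r·ν̂(y) = β·Σ_y |y|^r·α_y`; in particular this quantity does not depend on
the permanence parameter `b`. -/
theorem levy_measure_estimator_moments_independent_of_b
    (b β r : ℝ) (hb : b ∈ Set.Ioc (0:ℝ) 1) (hr : 0 ≤ r)
    (α : ℤ → ℝ) (hα0 : α 0 = 0)
    (hsum : Summable (fun y : ℤ => |(y : ℝ)| ^ r * |α y|))
    (ν : ℤ → ℝ)
    (hν : ∀ y : ℤ, ν y = (α y - (1 - b) * α (-y)) * β / ((2 - b) * b)) :
    (2 - b) * ∑' y : ℤ, |(y : ℝ)| ^ r * ν y = β * ∑' y : ℤ, |(y : ℝ)| ^ r * α y :=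
  levy_measure_estimator_moments_independent_of_b_general b β r hb α hsum ν hν
end
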